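/- arXiv:2401.05096 — 3 statements merged into one kernel-verified Lean document; each statement's English description precedes it below -/
import Mathlib

section
/- Let A be an n×n lower triangular complex matrix with all diagonal entries equal to 1 and all subdiagonal entries of absolute value at most 1. Then the inverse B = A⁻¹ is lower triangular with diagonal entries 1, and for j > k the entry B_{j,k} satisfies |B_{j,k}| ≤ 2^{j−k−1}. -/
/-!
Comparing the `(j, k)` entries of `A * A⁻¹ = 1` gives
`A⁻¹ j k = -∑_{k ≤ i < j} A j i * A⁻¹ i k`, so along column `k` every entry below the diagonal
is bounded by the sum of the entries above it. The partial sums of such a sequence at most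
double at each step, starting from `‖A⁻¹ k k‖ = 1`.
-/

open Finset

theorem sum_Ico_le_two_pow_of_le_sum_Ico {a : ℕ → ℝ} {k N : ℕ} (h₀ : a k ≤ 1)
    (h : ∀ m, k < m → m < N → a m ≤ ∑ i ∈ Ico k m, a i) :
    ∀ m, k < m → m ≤ N → ∑ i ∈ Ico k m, a i ≤ 2 ^ (m - k - 1) := by
  intro m hkm
  induction m, hkm using Nat.le_induction with
  | base => intro; simpa using h₀
  | succ m hkm ih =>
    intro hmN
    have hm : a m ≤ ∑ i ∈ Ico k m, a i := h m hkm (by omega)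
    have ih := ih (by omega)
    calc ∑ i ∈ Ico k (m + 1), a i = ∑ i ∈ Ico k m, a i + a m := sum_Ico_succ_top (by omega) a
      _ ≤ 2 * 2 ^ (m - k - 1) := by linarith
      _ = 2 ^ (m + 1 - k - 1) := by rw [← pow_succ']; congr 1; omega

theorem Fin.le_two_pow_of_le_sum_Ico {n : ℕ} {a : Fin n → ℝ} {k : Fin n} (h₀ : a k ≤ 1)
    (h : ∀ j, k < j → a j ≤ ∑ i ∈ Ico k j, a i) (j : Fin n) (hkj : k < j) :
    a j ≤ 2 ^ ((j : ℕ) - k - 1) := by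
  set b : ℕ → ℝ := fun m => if hm : m < n then a ⟨m, hm⟩ else 0
  have hb (j : Fin n) : b j = a j := dif_pos j.isLt
  have hsum (j : Fin n) : ∑ i ∈ Ico k j, a i = ∑ m ∈ Ico (k : ℕ) j, b m := by
    rw [← Fin.map_valEmbedding_Ico, sum_map]
    exact sum_congr rfl fun i _ => (hb i).symm
  have hrec (m : ℕ) (hkm : k < m) (hmn : m < n) : b m ≤ ∑ i ∈ Ico (k : ℕ) m, b i := by
    simpa [b, hmn, hsum] using h ⟨m, hmn⟩ hkm
  calc a j ≤ ∑ m ∈ Ico (k : ℕ) j, b m := hsum j ▸ h j hkj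
    _ ≤ 2 ^ ((j : ℕ) - k - 1) :=
      sum_Ico_le_two_pow_of_le_sum_Ico (hb k ▸ h₀) hrec j hkj j.isLt.le

namespace Matrix

variable {ι R : Type*} [Fintype ι] [LinearOrder ι]

theorem IsLowerTriangular.mul_apply_self [NonUnitalNonAssocSemiring R] {M N : Matrix ι ι R}
    (hM : M.IsLowerTriangular) (hN : N.IsLowerTriangular) (i : ι) :
    (M * N) i i = M i i * N i i := by
  rw [mul_apply]
  refine Fintype.sum_eq_single i fun l hli => ?_
  rcases hli.lt_or_gt with hli | hli
  · rw [hN hli, mul_zero]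
  · rw [hM hli, zero_mul]

section CommRing

variable [DecidableEq ι] [CommRing R] {A : Matrix ι ι R}

theorem IsLowerTriangular.inv (hA : A.IsLowerTriangular) : A⁻¹.IsLowerTriangular := by
  by_cases hdet : IsUnit A.det
  · have := A.invertibleOfIsUnitDet hdet
    exact blockTriangular_inv_of_blockTriangular hA
  · rw [nonsing_inv_apply_not_isUnit A hdet]
    exact blockTriangular_zero

theorem IsLowerTriangular.det_eq_one (hA : A.IsLowerTriangular) (hdiag : ∀ i, A i i = 1) :
    A.det = 1 := by
  simp [det_of_isLowerTriangular A hA, hdiag]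

theorem IsLowerTriangular.inv_apply_self (hA : A.IsLowerTriangular) (hdiag : ∀ i, A i i = 1)
    (i : ι) : A⁻¹ i i = 1 := by
  have h := congrFun₂ (mul_nonsing_inv A (hA.det_eq_one hdiag ▸ isUnit_one)) i i
  rwa [hA.mul_apply_self hA.inv, hdiag, one_mul, one_apply_eq] at h

theorem IsLowerTriangular.inv_apply_eq_neg_sum_Ico [LocallyFiniteOrder ι]
    (hA : A.IsLowerTriangular) (hdiag : ∀ i, A i i = 1) {j k : ι} (hkj : k < j) :
    A⁻¹ j k = -∑ i ∈ Ico k j, A j i * A⁻¹ i k := by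
  have h := congrFun₂ (mul_nonsing_inv A (hA.det_eq_one hdiag ▸ isUnit_one)) j k
  rw [one_apply_ne hkj.ne', mul_apply] at h
  have hsupp : ∑ i ∈ Icc k j, A j i * A⁻¹ i k = ∑ i, A j i * A⁻¹ i k := by
    refine sum_subset (subset_univ _) fun i _ hi => ?_
    rw [mem_Icc, not_and_or, not_le, not_le] at hi
    rcases hi with hik | hji
    · rw [hA.inv hik, mul_zero]
    · rw [hA hji, zero_mul]
  rw [← hsupp, ← Ico_insert_right hkj.le, sum_insert right_notMem_Ico, hdiag, one_mul] at h
  exact eq_neg_of_add_eq_zero_left h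

end CommRing

theorem IsLowerTriangular.norm_inv_apply_le_sum_Ico [DecidableEq ι] [NormedCommRing R]
    [LocallyFiniteOrder ι] {A : Matrix ι ι R} (hA : A.IsLowerTriangular)
    (hdiag : ∀ i, A i i = 1) (hsub : ∀ j k, k < j → ‖A j k‖ ≤ 1) {j k : ι} (hkj : k < j) :
    ‖A⁻¹ j k‖ ≤ ∑ i ∈ Ico k j, ‖A⁻¹ i k‖ := by
  rw [hA.inv_apply_eq_neg_sum_Ico hdiag hkj, norm_neg]
  refine (norm_sum_le _ _).trans (sum_le_sum fun i hi => ?_)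
  calc ‖A j i * A⁻¹ i k‖ ≤ ‖A j i‖ * ‖A⁻¹ i k‖ := norm_mul_le _ _
    _ ≤ 1 * ‖A⁻¹ i k‖ := by gcongr; exact hsub j i (mem_Ico.1 hi).2
    _ = ‖A⁻¹ i k‖ := one_mul _

end Matrix

theorem stmt1 (n : ℕ) (A : Matrix (Fin n) (Fin n) ℂ)
    (hlt : ∀ j k : Fin n, (j : ℕ) < (k : ℕ) → A j k = 0)
    (hdiag : ∀ j : Fin n, A j j = 1)
    (hsub : ∀ j k : Fin n, (k : ℕ) < (j : ℕ) → ‖A j k‖ ≤ 1) :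
    (∀ j k : Fin n, (j : ℕ) < (k : ℕ) → A⁻¹ j k = 0) ∧
    (∀ j : Fin n, A⁻¹ j j = 1) ∧
    (∀ j k : Fin n, (k : ℕ) < (j : ℕ) →
      ‖A⁻¹ j k‖ ≤ 2 ^ ((j : ℕ) - (k : ℕ) - 1)) := by
  have hA : A.IsLowerTriangular := fun j k h => hlt j k h
  refine ⟨fun j k h => hA.inv h, hA.inv_apply_self hdiag, fun j k hkj => ?_⟩
  refine Fin.le_two_pow_of_le_sum_Ico (a := fun i => ‖A⁻¹ i k‖) ?_
    (fun j' hkj' => hA.norm_inv_apply_le_sum_Ico hdiag hsub hkj') j hkj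
  rw [hA.inv_apply_self hdiag, norm_one]
end

section
/- Let A be an n×n lower triangular complex matrix with diagonal entries 1 and subdiagonal entries of absolute value at most 1. If w = A⁻¹ Z for Z ∈ ℂⁿ, then |w₁| + ⋯ + |wₙ| ≤ Σ_{j=1}^n 2^{n−j} |Z_j|. -/
/-! Forward substitution in `A w = Z` gives `‖w j‖ ≤ ‖Z j‖ + ∑ k < j, ‖w k‖`, so the partial
sums `S m = ∑ j < m, ‖w j‖` satisfy `S (m + 1) ≤ 2 S m + ‖Z m‖`, which unrolls to the weights
`2 ^ (n - 1 - j)`. -/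

open Finset Matrix

theorem Matrix.norm_le_norm_add_sum_Iio_of_mulVec_eq {ι R : Type*} [Fintype ι] [LinearOrder ι]
    [LocallyFiniteOrderBot ι] [NormedRing R] {A : Matrix ι ι R} (hA : A.IsLowerTriangular)
    (hdiag : ∀ i, A i i = 1) (hsub : ∀ i j, j < i → ‖A i j‖ ≤ 1) {w z : ι → R}
    (hw : A *ᵥ w = z) (i : ι) :
    ‖w i‖ ≤ ‖z i‖ + ∑ j ∈ Iio i, ‖w j‖ := by
  have hz : z i = ∑ j ∈ Iio i, A i j * w j + w i := by
    rw [← hw, mulVec, dotProduct, ← sum_subset (subset_univ (Iic i)),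
      ← sum_Iio_add_eq_sum_Iic, hdiag, one_mul]
    intro j _ hj
    have hij : i < j := by simpa using hj
    rw [hA hij, zero_mul]
  calc ‖w i‖ = ‖z i - ∑ j ∈ Iio i, A i j * w j‖ := by rw [hz, add_sub_cancel_left]
    _ ≤ ‖z i‖ + ∑ j ∈ Iio i, ‖A i j‖ * ‖w j‖ :=
      (norm_sub_le _ _).trans <| add_le_add_right
        ((norm_sum_le _ _).trans (sum_le_sum fun j _ => norm_mul_le _ _)) _
    _ ≤ ‖z i‖ + ∑ j ∈ Iio i, ‖w j‖ := by
      gcongr with j hj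
      exact mul_le_of_le_one_left (norm_nonneg _) (hsub i j (mem_Iio.mp hj))

theorem Fin.sum_le_sum_two_pow_mul_of_le_add_sum_Iio {n : ℕ} (a b : Fin n → ℝ)
    (h : ∀ i, a i ≤ b i + ∑ j ∈ Iio i, a j) :
    ∑ i, a i ≤ ∑ i : Fin n, 2 ^ (n - 1 - (i : ℕ)) * b i := by
  induction n with
  | zero => simp
  | succ n ih =>
    have hcast : ∑ i : Fin n, a i.castSucc ≤ ∑ i : Fin n, 2 ^ (n - 1 - (i : ℕ)) * b i.castSucc :=
      ih _ _ fun i => by simpa [← map_castSuccEmb_Iio] using h i.castSucc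
    have hlast : a (last n) ≤ b (last n) + ∑ i : Fin n, a i.castSucc := by
      simpa [Iio_last_eq_map] using h (last n)
    have hpow (i : Fin n) : 2 * 2 ^ (n - 1 - (i : ℕ)) = (2 : ℝ) ^ (n - (i : ℕ)) := by
      rw [← pow_succ']; congr 1; omega
    rw [sum_univ_castSucc, sum_univ_castSucc]
    calc ∑ i : Fin n, a i.castSucc + a (last n)
        ≤ 2 * ∑ i : Fin n, 2 ^ (n - 1 - (i : ℕ)) * b i.castSucc + b (last n) := by linarith
      _ = _ := by simp [mul_sum, ← mul_assoc, hpow]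

theorem stmt2 (n : ℕ) (A : Matrix (Fin n) (Fin n) ℂ)
    (hlt : ∀ j k : Fin n, (j : ℕ) < (k : ℕ) → A j k = 0)
    (hdiag : ∀ j : Fin n, A j j = 1)
    (hsub : ∀ j k : Fin n, (k : ℕ) < (j : ℕ) → ‖A j k‖ ≤ 1)
    (Z w : Fin n → ℂ) (hw : w = A⁻¹.mulVec Z) :
    ∑ j : Fin n, ‖w j‖
      ≤ ∑ j : Fin n, (2 : ℝ) ^ (n - 1 - (j : ℕ)) * ‖Z j‖ := by
  have hA : A.IsLowerTriangular := hlt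
  have hdet : A.det = 1 := by simp [det_of_isLowerTriangular A hA, hdiag]
  have hAw : A *ᵥ w = Z := by
    rw [hw, mulVec_mulVec, mul_nonsing_inv A (by simp [hdet]), one_mulVec]
  exact Fin.sum_le_sum_two_pow_mul_of_le_add_sum_Iio _ _
    (norm_le_norm_add_sum_Iio_of_mulVec_eq hA hdiag hsub hAw)
end

section
/- Let A be an n×n lower triangular complex matrix with diagonal entries 1 and subdiagonal entries of absolute value at most 1, viewed as a linear map on ℂⁿ. Let Eₙ = {w ∈ ℂⁿ : |w₁|+⋯+|wₙ| < 1} and cₙ = √((4ⁿ−1)/3). Then the open Euclidean ball of radius 1/cₙ centered at 0 is contained in A(Eₙ). -/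
/-!
Forward substitution in `A w = z` gives `‖w j‖ ≤ ‖z j‖ + ∑ k < j, ‖w k‖`, so the partial sums of
`‖w j‖` at most double at each step and `‖w‖₁ ≤ ∑ k, 2 ^ (n - 1 - k) ‖z k‖`. By Cauchy–Schwarz this
is at most `cₙ ‖z‖₂`, because `∑ k < n, 4 ^ k = (4 ^ n - 1) / 3 = cₙ ^ 2`.
-/

open Finset

namespace Matrix

variable {m R : Type*} [Fintype m] [LinearOrder m]

theorem det_eq_one_of_isLowerTriangular [CommRing R] {A : Matrix m m R}
    (hA : A.IsLowerTriangular) (hdiag : ∀ i, A i i = 1) : A.det = 1 := by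
  simp [det_of_isLowerTriangular A hA, hdiag]

theorem mulVec_surjective_of_isLowerTriangular [CommRing R] {A : Matrix m m R}
    (hA : A.IsLowerTriangular) (hdiag : ∀ i, A i i = 1) : Function.Surjective A.mulVec :=
  mulVec_surjective_iff_isUnit.2 <| (isUnit_iff_isUnit_det A).2 <| by
    simp [det_eq_one_of_isLowerTriangular hA hdiag]

variable [LocallyFiniteOrderBot m]

theorem mulVec_apply_eq_add_sum_Iio [Semiring R] {A : Matrix m m R}
    (hA : A.IsLowerTriangular) (hdiag : ∀ i, A i i = 1) (w : m → R) (j : m) :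
    (A *ᵥ w) j = w j + ∑ k ∈ Iio j, A j k * w k := by
  have hzero : ∀ k ∈ univ, k ∉ Iic j → A j k * w k = 0 := fun k _ hk => by
    rw [hA (OrderDual.toDual_lt_toDual.2 (not_le.1 (mt mem_Iic.2 hk))), zero_mul]
  rw [mulVec, dotProduct, ← sum_subset (subset_univ _) hzero, ← Iio_insert,
    sum_insert notMem_Iio_self, hdiag, one_mul]

theorem norm_le_norm_mulVec_apply_add_sum_Iio [SeminormedRing R] {A : Matrix m m R}
    (hA : A.IsLowerTriangular) (hdiag : ∀ i, A i i = 1)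
    (hsub : ∀ j k, k < j → ‖A j k‖ ≤ 1) (w : m → R) (j : m) :
    ‖w j‖ ≤ ‖(A *ᵥ w) j‖ + ∑ k ∈ Iio j, ‖w k‖ := by
  rw [mulVec_apply_eq_add_sum_Iio hA hdiag]
  calc ‖w j‖ ≤ ‖w j + ∑ k ∈ Iio j, A j k * w k‖ + ‖∑ k ∈ Iio j, A j k * w k‖ :=
        norm_le_add_norm_add _ _
    _ ≤ ‖w j + ∑ k ∈ Iio j, A j k * w k‖ + ∑ k ∈ Iio j, ‖w k‖ := by
        gcongr
        refine (norm_sum_le _ _).trans (sum_le_sum fun k hk => ?_)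
        calc ‖A j k * w k‖ ≤ ‖A j k‖ * ‖w k‖ := norm_mul_le _ _
          _ ≤ ‖w k‖ := mul_le_of_le_one_left (norm_nonneg _) (hsub j k (mem_Iio.1 hk))

end Matrix

namespace Fin

theorem sum_le_sum_two_pow_rev_mul {α : Type*} [CommRing α] [PartialOrder α] [IsOrderedRing α]
    {n : ℕ} {u s : Fin n → α}
    (h : ∀ j, u j ≤ s j + ∑ k ∈ Iio j, u k) : ∑ j, u j ≤ ∑ k, 2 ^ (k.rev : ℕ) * s k := by
  induction n with
  | zero => simp
  | succ m ih =>
    have hinit : ∑ j : Fin m, u j.castSucc ≤ ∑ k : Fin m, 2 ^ (k.rev : ℕ) * s k.castSucc :=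
      ih fun j => by simpa [← map_castSuccEmb_Iio] using h j.castSucc
    have hlast : u (last m) ≤ s (last m) + ∑ j : Fin m, u j.castSucc := by
      simpa [Iio_last_eq_map] using h (last m)
    calc ∑ j, u j = ∑ j : Fin m, u j.castSucc + u (last m) := sum_univ_castSucc u
      _ ≤ 2 * ∑ j : Fin m, u j.castSucc + s (last m) := by
        rw [two_mul, add_assoc]; gcongr; rwa [add_comm]
      _ ≤ 2 * ∑ k : Fin m, 2 ^ (k.rev : ℕ) * s k.castSucc + s (last m) := by
        gcongr; exact zero_le_two
      _ = ∑ k, 2 ^ (k.rev : ℕ) * s k := by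
        rw [sum_univ_castSucc (fun k => 2 ^ (k.rev : ℕ) * s k), mul_sum]
        simp only [rev_castSucc, val_succ, rev_last, val_zero, pow_succ', pow_zero, one_mul,
          mul_assoc]

theorem sum_two_pow_rev_sq (n : ℕ) : ∑ k : Fin n, ((2 : ℝ) ^ (k.rev : ℕ)) ^ 2 = (4 ^ n - 1) / 3 := by
  simp_rw [← pow_mul, pow_mul', show (2 : ℝ) ^ 2 = 4 by norm_num]
  rw [Fintype.sum_equiv revPerm (fun k : Fin n => (4 : ℝ) ^ (k.rev : ℕ)) (fun k => 4 ^ (k : ℕ))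
      fun _ => rfl, sum_univ_eq_sum_range (fun k => (4 : ℝ) ^ k), geom_sum_eq (by norm_num)]
  norm_num

theorem sum_two_pow_rev_mul_le {n : ℕ} (x : Fin n → ℝ) :
    ∑ k, 2 ^ (k.rev : ℕ) * x k ≤ √((4 ^ n - 1) / 3) * √(∑ k, x k ^ 2) := by
  simpa only [sum_two_pow_rev_sq] using
    Real.sum_mul_le_sqrt_mul_sqrt univ (fun k => 2 ^ (k.rev : ℕ)) x

end Fin

theorem stmt3 (n : ℕ) (A : Matrix (Fin n) (Fin n) ℂ)
    (hlt : ∀ j k : Fin n, (j : ℕ) < (k : ℕ) → A j k = 0)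
    (hdiag : ∀ j : Fin n, A j j = 1)
    (hsub : ∀ j k : Fin n, (k : ℕ) < (j : ℕ) → ‖A j k‖ ≤ 1) :
    Metric.ball (0 : EuclideanSpace ℂ (Fin n)) (1 / Real.sqrt ((4 ^ n - 1) / 3))
      ⊆ (fun w : EuclideanSpace ℂ (Fin n) => (WithLp.toLp 2 (A.mulVec w) : EuclideanSpace ℂ (Fin n))) ''
        { w : EuclideanSpace ℂ (Fin n) | ∑ j : Fin n, ‖w j‖ < 1 } := by
  intro z hz
  have hA : A.IsLowerTriangular := fun j k h => hlt j k h
  obtain ⟨w, hw⟩ := Matrix.mulVec_surjective_of_isLowerTriangular hA hdiag z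
  have hcz : √((4 ^ n - 1) / 3) * ‖z‖ < 1 := by
    rw [mem_ball_zero_iff] at hz
    rcases (Real.sqrt_nonneg ((4 ^ n - 1) / 3)).eq_or_lt with hc | hc
    · simp [← hc]
    · exact (lt_div_iff₀' hc).1 hz
  refine ⟨WithLp.toLp 2 w, ?_, by simp [hw]⟩
  calc ∑ j, ‖w j‖ ≤ ∑ k, 2 ^ (k.rev : ℕ) * ‖z k‖ := Fin.sum_le_sum_two_pow_rev_mul fun j => by
        simpa [hw] using Matrix.norm_le_norm_mulVec_apply_add_sum_Iio hA hdiag hsub w j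
    _ ≤ √((4 ^ n - 1) / 3) * ‖z‖ := by
        rw [EuclideanSpace.norm_eq]
        exact Fin.sum_two_pow_rev_mul_le _
    _ < 1 := hcz
end
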